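/- Let f : ℝ → ℝ be the lift of a circle endomorphism with two turns, with turning data z₀ < y₀ < z₀ + 1, and let J′ = [y₀, w₀′] be its lower climbing interval. Then there exist a point ỹ₀ ∈ J′ and a sequence (ỹ_{−k})_{k≥0} with ỹ_{−0} = ỹ₀, f(ỹ_{−(k+1)}) = ỹ_{−k} for all k ≥ 0, and ỹ_{−k} ∈ ⋃_{m∈ℤ} (J′ + m) for all k ≥ 0, such that lim_{n→∞} (fⁿ(ỹ₀) − ỹ₀)/n = lim_{n→∞} (ỹ₀ − ỹ_{−n})/n = inf ρ(f). -/

import Mathlib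

/-!
Replace `f` by its lower envelope `g x = inf_{t ≥ x} f t`, a nondecreasing degree-one lift with
`g ≤ f`; hence `gⁿ ≤ fⁿ` and every rotation number of `f` is at least the translation number `τ`
of `g`. On `J' = [y₀, w₀']` the map climbs (`f x ≤ f t` for all `t ≥ x`), so `g = f` on the
integer translates `K` of `J'`, and `f` maps `J'` onto `[f y₀, f y₀ + 1]`, so every point has an
`f`-preimage in `K`. Iterating a choice of such preimages gives a backward orbit in `K`, and
compactness of `J'` gives a point of `J'` whose whole forward `g`-orbit stays in `K`. Along both
orbits `f` and `g` agree, and `|gⁿ x - x - nτ| < 1`; this gives both limits and `τ = inf ρ(f)`.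
-/

open Filter Topology

/-- A degree-one lift: a continuous map `f : ℝ → ℝ` with `f (x+1) = f x + 1`. -/
def IsDegreeOneLift (f : ℝ → ℝ) : Prop :=
  Continuous f ∧ ∀ x : ℝ, f (x + 1) = f x + 1

/-- `f` is the lift of a circle endomorphism with two turns, with turning data
`z₀ < y₀ < z₀ + 1`: it is a degree-one lift, strictly antitone on `[z₀, y₀]` and
strictly monotone on `[y₀, z₀ + 1]`. -/
def IsTwoTurnsLift (f : ℝ → ℝ) (z₀ y₀ : ℝ) : Prop :=
  IsDegreeOneLift f ∧ z₀ < y₀ ∧ y₀ < z₀ + 1 ∧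
    StrictAntiOn f (Set.Icc z₀ y₀) ∧ StrictMonoOn f (Set.Icc y₀ (z₀ + 1))

/-- The rotation set `ρ(f) = { limsup (fⁿ(x) - x)/n : x ∈ ℝ }`. -/
noncomputable def rotationSet (f : ℝ → ℝ) : Set ℝ :=
  {r : ℝ | ∃ x : ℝ,
    Filter.limsup (fun n : ℕ => (f^[n] x - x) / (n : ℝ)) Filter.atTop = r}


open Set Function

namespace IsDegreeOneLift

variable {f : ℝ → ℝ}

theorem map_add_int (hf : IsDegreeOneLift f) (x : ℝ) (m : ℤ) : f (x + m) = f x + m :=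
  AddConstMapClass.map_add_int (⟨f, hf.2⟩ : AddConstMap ℝ ℝ 1 1) x m

theorem exists_abs_sub_le (hf : IsDegreeOneLift f) : ∃ C, ∀ x, |f x - x| ≤ C := by
  have hper : Periodic (fun x => f x - x) 1 := fun x => by simp only [hf.2 x]; ring
  obtain ⟨C, hC⟩ := isBounded_iff_forall_norm_le.1
    (hper.isBounded_of_continuous one_ne_zero (hf.1.sub continuous_id))
  exact ⟨C, fun x => hC _ (mem_range_self x)⟩

theorem add_floor_le_of_isMinOn (hf : IsDegreeOneLift f) {z a : ℝ}
    (ha : IsMinOn f (Icc z (z + 1)) a) (t : ℝ) : f a + ⌊t - z⌋ ≤ f t := by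
  have hs : z + Int.fract (t - z) ∈ Icc z (z + 1) :=
    ⟨le_add_of_nonneg_right (Int.fract_nonneg _), by linarith [Int.fract_lt_one (t - z)]⟩
  have ht : t = z + Int.fract (t - z) + ⌊t - z⌋ := by linarith [Int.floor_add_fract (t - z)]
  rw [ht, hf.map_add_int, ← ht]
  linarith [isMinOn_iff.1 ha _ hs]

theorem bddBelow_image_Ici (hf : IsDegreeOneLift f) (x : ℝ) : BddBelow (f '' Ici x) := by
  obtain ⟨C, hC⟩ := hf.exists_abs_sub_le
  refine ⟨x - C, ?_⟩
  rintro _ ⟨t, ht, rfl⟩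
  linarith [(abs_le.1 (hC t)).1, mem_Ici.1 ht]

noncomputable def lowerLift (hf : IsDegreeOneLift f) : CircleDeg1Lift where
  toFun x := sInf (f '' Ici x)
  monotone' _ _ hab :=
    csInf_le_csInf (hf.bddBelow_image_Ici _) ((nonempty_Ici).image f)
      (image_mono (Ici_subset_Ici.2 hab))
  map_add_one' x := by
    have : f '' Ici (x + 1) = OrderIso.addRight (1 : ℝ) '' (f '' Ici x) := by
      rw [image_image, ← image_add_const_Ici, image_image]
      simp only [OrderIso.addRight_apply, hf.2]
    rw [this, ← OrderIso.map_csInf' _ ((nonempty_Ici).image f) (hf.bddBelow_image_Ici x)]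
    rfl

theorem lowerLift_le (hf : IsDegreeOneLift f) (x : ℝ) : hf.lowerLift x ≤ f x :=
  csInf_le (hf.bddBelow_image_Ici x) (mem_image_of_mem f self_mem_Ici)

theorem lowerLift_apply_of_forall_le (hf : IsDegreeOneLift f) {x : ℝ}
    (hx : ∀ t, x ≤ t → f x ≤ f t) : hf.lowerLift x = f x :=
  IsLeast.csInf_eq ⟨mem_image_of_mem f self_mem_Ici, by rintro _ ⟨t, ht, rfl⟩; exact hx t ht⟩

end IsDegreeOneLift

def intTranslates (J : Set ℝ) : Set ℝ :=
  {x | ∃ m : ℤ, x - m ∈ J}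

theorem subset_intTranslates (J : Set ℝ) : J ⊆ intTranslates J :=
  fun x hx => ⟨0, by simpa using hx⟩

theorem sub_int_mem_intTranslates {J : Set ℝ} {x : ℝ} (hx : x ∈ intTranslates J) (n : ℤ) :
    x - n ∈ intTranslates J := by
  obtain ⟨m, hm⟩ := hx
  exact ⟨m - n, by rwa [Int.cast_sub, sub_sub_sub_cancel_right]⟩

theorem IsCompact.isClosed_intTranslates {J : Set ℝ} (hJ : IsCompact J) :
    IsClosed (intTranslates J) := by
  let π : ℝ → AddCircle (1 : ℝ) := QuotientAddGroup.mk
  have hπ : Continuous π := continuous_quotient_mk'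
  have : intTranslates J = π ⁻¹' (π '' J) := by
    ext x
    simp only [intTranslates, mem_preimage, mem_image, π,
      QuotientAddGroup.eq_iff_sub_mem, AddSubgroup.mem_zmultiples_iff, zsmul_one]
    constructor
    · rintro ⟨m, hm⟩
      exact ⟨x - m, hm, -m, by push_cast; ring⟩
    · rintro ⟨y, hy, m, hm⟩
      exact ⟨-m, by rwa [Int.cast_neg, sub_neg_eq_add, hm, add_sub_cancel]⟩
  rw [this]
  exact (hJ.image hπ).isClosed.preimage hπ

theorem IsCompact.exists_mem_forall_iterate_mem {X : Type*} [TopologicalSpace X] {g : X → X}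
    (hg : Continuous g) {J K : Set X} (hJ : IsCompact J) (hK : IsClosed K)
    (h : ∀ n, ∃ x ∈ J, ∀ k ≤ n, g^[k] x ∈ K) : ∃ x ∈ J, ∀ k, g^[k] x ∈ K := by
  obtain ⟨x, hxJ, hxK⟩ := hJ.inter_iInter_nonempty (fun k => g^[k] ⁻¹' K)
    (fun k => hK.preimage (hg.iterate k)) fun u => by
      obtain ⟨x, hxJ, hxK⟩ := h (u.sup id)
      exact ⟨x, hxJ, mem_iInter₂.2 fun k hk => hxK k (Finset.le_sup (f := id) hk)⟩
  exact ⟨x, hxJ, mem_iInter.1 hxK⟩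

theorem Set.EqOn.iterate_eq {α : Type*} {f g : α → α} {s : Set α} (h : EqOn f g s) {x : α}
    (hx : ∀ k, g^[k] x ∈ s) (n : ℕ) : f^[n] x = g^[n] x := by
  induction n with
  | zero => rfl
  | succ n ih => rw [iterate_succ_apply', iterate_succ_apply', ih, h (hx n)]

theorem Set.EqOn.exists_backward_orbit {α : Type*} {f g : α → α} {K : Set α} (h : EqOn f g K)
    (hpre : ∀ v, ∃ x ∈ K, g x = v) {x₀ : α} (hx₀ : x₀ ∈ K) :
    ∃ y : ℕ → α, y 0 = x₀ ∧ (∀ k, f (y (k + 1)) = y k) ∧ (∀ k, y k ∈ K) ∧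
      ∀ n, g^[n] (y n) = x₀ := by
  choose P hPK hgP using hpre
  refine ⟨fun n => P^[n] x₀, rfl, fun k => ?_, fun k => ?_, fun n => LeftInverse.iterate hgP n x₀⟩
  · show f (P^[k + 1] x₀) = P^[k] x₀
    rw [iterate_succ_apply', h (hPK _), hgP]
  · cases k with
    | zero => exact hx₀
    | succ k =>
      show P^[k + 1] x₀ ∈ K
      rw [iterate_succ_apply']
      exact hPK _

namespace CircleDeg1Lift

theorem abs_pow_apply_sub_sub_lt (G : CircleDeg1Lift) (n : ℕ) (x : ℝ) :
    |(G ^ n) x - x - n * G.translationNumber| < 1 := by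
  have hupper := (G ^ n).map_lt_add_translationNumber_add_one x
  have hlower := (G ^ n).translationNumber_le_ceil_sub x
  rw [translationNumber_pow] at hupper hlower
  rw [abs_lt]
  constructor <;> linarith [Int.ceil_lt_add_one ((G ^ n) x - x)]

theorem tendsto_translationNumber_of_pow_apply_eq (G : CircleDeg1Lift) {y : ℕ → ℝ}
    (hy : ∀ n, (G ^ n) (y n) = y 0) :
    Tendsto (fun n : ℕ => (y 0 - y n) / n) atTop (𝓝 G.translationNumber) := by
  rw [tendsto_iff_dist_tendsto_zero]
  refine squeeze_zero' (Eventually.of_forall fun n => dist_nonneg)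
    (eventually_atTop.2 ⟨1, fun n hn => ?_⟩) tendsto_one_div_atTop_nhds_zero_nat
  have hn : (0 : ℝ) < n := by exact_mod_cast hn
  rw [Real.dist_eq, ← hy n, div_sub' hn.ne', abs_div, abs_of_pos hn]
  exact div_le_div_of_nonneg_right (G.abs_pow_apply_sub_sub_lt n (y n)).le hn.le

theorem exists_mem_forall_iterate_mem (G : CircleDeg1Lift) {J : Set ℝ} (hJ : IsCompact J)
    (hpre : ∀ v, ∃ x ∈ intTranslates J, G x = v) :
    ∃ x ∈ J, ∀ k, G^[k] x ∈ intTranslates J := by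
  have hG : Continuous G := G.continuous_iff_surjective.2 fun v => (hpre v).imp fun _ hx => hx.2
  choose P hPJ hGP using hpre
  -- `P^[n + 1] 0`, translated back into `J`, keeps its first `n` images in the translates
  refine hJ.exists_mem_forall_iterate_mem hG hJ.isClosed_intTranslates fun n => ?_
  have hPJ' : ∀ j, P^[j + 1] 0 ∈ intTranslates J := fun j => by
    rw [iterate_succ_apply']
    exact hPJ _
  obtain ⟨m, hm⟩ := hPJ' n
  refine ⟨P^[n + 1] 0 - m, hm, fun k hk => ?_⟩
  rw [← coe_pow, map_sub_int, coe_pow, show n + 1 = k + (n - k + 1) by omega,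
    iterate_add_apply, LeftInverse.iterate hGP k]
  exact sub_int_mem_intTranslates (hPJ' _) m

end CircleDeg1Lift

theorem isLeast_rotationSet {f : ℝ → ℝ} (G : CircleDeg1Lift) (hGf : ∀ x, G x ≤ f x) {C : ℝ}
    (hC : ∀ x, f x ≤ x + C) {x₀ : ℝ} (hx₀ : ∀ n, f^[n] x₀ = (G ^ n) x₀) :
    IsLeast (rotationSet f) G.translationNumber := by
  refine ⟨⟨x₀, ((G.tendsto_translationNumber x₀).congr fun n => by rw [hx₀]).limsup_eq⟩, ?_⟩
  rintro _ ⟨x, rfl⟩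
  have hiter : ∀ n : ℕ, f^[n] x ≤ x + n * C := by
    intro n
    induction n with
    | zero => simp
    | succ n ih => rw [iterate_succ_apply']; push_cast; linarith [hC (f^[n] x)]
  have hbdd : IsBoundedUnder (· ≤ ·) atTop fun n : ℕ => (f^[n] x - x) / n := by
    refine isBoundedUnder_of_eventually_le (a := C) (eventually_atTop.2 ⟨1, fun n hn => ?_⟩)
    have hn : (0 : ℝ) < n := by exact_mod_cast hn
    rw [div_le_iff₀ hn]
    linarith [hiter n]
  have hGn : ∀ n : ℕ, (G ^ n) x ≤ f^[n] x := fun n => by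
    rw [CircleDeg1Lift.coe_pow]
    exact G.monotone.iterate_le_of_le hGf n x
  rw [← (G.tendsto_translationNumber x).limsup_eq]
  exact limsup_le_limsup (Eventually.of_forall fun n => by
    dsimp only; gcongr; exact hGn n) (G.tendsto_translationNumber x).isCoboundedUnder_le hbdd

/-- The right end `w₀'` of the lower climbing interval `J' = [y₀, w₀']`. -/
noncomputable def lowerClimbingEnd (f : ℝ → ℝ) (z₀ y₀ : ℝ) : ℝ :=
  sInf {x ∈ Icc y₀ (z₀ + 1) | f x = f y₀ + 1}

namespace IsTwoTurnsLift

variable {f : ℝ → ℝ} {z₀ y₀ : ℝ}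

theorem isMinOn (hf : IsTwoTurnsLift f z₀ y₀) : IsMinOn f (Icc z₀ (z₀ + 1)) y₀ := by
  obtain ⟨-, hzy, hyz, hanti, hmono⟩ := hf
  intro s hs
  rcases le_total s y₀ with h | h
  · exact hanti.antitoneOn ⟨hs.1, h⟩ ⟨hzy.le, le_rfl⟩ h
  · exact hmono.monotoneOn ⟨le_rfl, hyz.le⟩ ⟨h, hs.2⟩ h

theorem lowerClimbingEnd_mem (hf : IsTwoTurnsLift f z₀ y₀) :
    lowerClimbingEnd f z₀ y₀ ∈ {x ∈ Icc y₀ (z₀ + 1) | f x = f y₀ + 1} := by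
  obtain ⟨⟨hcont, hadd⟩, hzy, hyz, hanti, -⟩ := hf
  have hfz : f y₀ < f z₀ := hanti ⟨le_rfl, hzy.le⟩ ⟨hzy.le, le_rfl⟩ hzy
  have hv : f y₀ + 1 ∈ Icc (f y₀) (f (z₀ + 1)) := ⟨by linarith, by rw [hadd]; linarith⟩
  obtain ⟨x, hx, hfx⟩ := intermediate_value_Icc hyz.le hcont.continuousOn hv
  exact (isClosed_Icc.inter (isClosed_eq hcont continuous_const)).csInf_mem ⟨x, hx, hfx⟩
    ⟨y₀, fun x hx => hx.1.1⟩

theorem map_lowerClimbingEnd (hf : IsTwoTurnsLift f z₀ y₀) :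
    f (lowerClimbingEnd f z₀ y₀) = f y₀ + 1 :=
  hf.lowerClimbingEnd_mem.2

theorem lt_lowerClimbingEnd (hf : IsTwoTurnsLift f z₀ y₀) : y₀ < lowerClimbingEnd f z₀ y₀ := by
  refine hf.lowerClimbingEnd_mem.1.1.lt_of_ne fun h => ?_
  have := hf.map_lowerClimbingEnd
  rw [← h] at this
  linarith

theorem map_le_map_of_mem_Icc_of_le (hf : IsTwoTurnsLift f z₀ y₀) {x t : ℝ}
    (hx : x ∈ Icc y₀ (lowerClimbingEnd f z₀ y₀)) (hxt : x ≤ t) : f x ≤ f t := by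
  obtain ⟨⟨hyw, hwz⟩, hfw⟩ := hf.lowerClimbingEnd_mem
  have hmono := hf.2.2.2.2.monotoneOn
  rcases le_or_gt t (z₀ + 1) with ht | ht
  · exact hmono ⟨hx.1, hx.2.trans hwz⟩ ⟨hx.1.trans hxt, ht⟩ hxt
  · have hfx : f x ≤ f y₀ + 1 := hfw ▸ hmono ⟨hx.1, hx.2.trans hwz⟩ ⟨hyw, hwz⟩ hx.2
    have hfloor : (1 : ℝ) ≤ ⌊t - z₀⌋ := by exact_mod_cast Int.le_floor.2 (by push_cast; linarith)
    linarith [hf.1.add_floor_le_of_isMinOn hf.isMinOn t]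

theorem exists_mem_intTranslates_map_eq (hf : IsTwoTurnsLift f z₀ y₀) (v : ℝ) :
    ∃ x ∈ intTranslates (Icc y₀ (lowerClimbingEnd f z₀ y₀)), f x = v := by
  set m := ⌈v - f y₀ - 1⌉
  have hv : v - m ∈ Icc (f y₀) (f (lowerClimbingEnd f z₀ y₀)) := by
    rw [hf.map_lowerClimbingEnd]
    constructor <;> linarith [Int.ceil_lt_add_one (v - f y₀ - 1), Int.le_ceil (v - f y₀ - 1)]
  obtain ⟨s, hs, hfs⟩ := intermediate_value_Icc hf.lt_lowerClimbingEnd.le hf.1.1.continuousOn hv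
  exact ⟨s + m, ⟨m, by rwa [add_sub_cancel_right]⟩, by rw [hf.1.map_add_int, hfs, sub_add_cancel]⟩

theorem lowerLift_eqOn (hf : IsTwoTurnsLift f z₀ y₀) :
    EqOn hf.1.lowerLift f (intTranslates (Icc y₀ (lowerClimbingEnd f z₀ y₀))) := by
  rintro x ⟨m, hm⟩
  have h := hf.1.lowerLift_apply_of_forall_le fun _ => hf.map_le_map_of_mem_Icc_of_le hm
  rw [← sub_add_cancel x (m : ℝ), CircleDeg1Lift.map_add_int, h, hf.1.map_add_int]

end IsTwoTurnsLift

theorem backward_orbit_in_lower_climbing_interval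
    (f : ℝ → ℝ) (z₀ y₀ : ℝ) (hf : IsTwoTurnsLift f z₀ y₀)
    (w₀' : ℝ) (hw₀' : w₀' = sInf {x ∈ Set.Icc y₀ (z₀ + 1) | f x = f y₀ + 1})
    (J' : Set ℝ) (hJ' : J' = Set.Icc y₀ w₀') :
    ∃ y : ℕ → ℝ,
      y 0 ∈ J' ∧
      (∀ k : ℕ, f (y (k + 1)) = y k) ∧
      (∀ k : ℕ, ∃ m : ℤ, y k - (m : ℝ) ∈ J') ∧
      Tendsto (fun n : ℕ => (f^[n] (y 0) - y 0) / (n : ℝ)) atTop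
        (𝓝 (sInf (rotationSet f))) ∧
      Tendsto (fun n : ℕ => (y 0 - y n) / (n : ℝ)) atTop
        (𝓝 (sInf (rotationSet f))) := by
  obtain rfl : w₀' = lowerClimbingEnd f z₀ y₀ := hw₀'
  subst hJ'
  set G := hf.1.lowerLift
  have hGf : EqOn G f (intTranslates (Icc y₀ (lowerClimbingEnd f z₀ y₀))) := hf.lowerLift_eqOn
  have hpre (v : ℝ) : ∃ x ∈ intTranslates (Icc y₀ (lowerClimbingEnd f z₀ y₀)), G x = v :=
    (hf.exists_mem_intTranslates_map_eq v).imp fun _ hx => ⟨hx.1, (hGf hx.1).trans hx.2⟩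
  obtain ⟨x₀, hx₀J, hx₀K⟩ := G.exists_mem_forall_iterate_mem isCompact_Icc hpre
  have hforward (n : ℕ) : f^[n] x₀ = (G ^ n) x₀ := by
    rw [CircleDeg1Lift.coe_pow]
    exact hGf.symm.iterate_eq hx₀K n
  obtain ⟨C, hC⟩ := hf.1.exists_abs_sub_le
  have hρ : sInf (rotationSet f) = G.translationNumber :=
    (isLeast_rotationSet G hf.1.lowerLift_le (fun x => by linarith [(abs_le.1 (hC x)).2])
      hforward).csInf_eq
  obtain ⟨y, rfl, hfy, hyK, hGy⟩ :=
    hGf.symm.exists_backward_orbit hpre (subset_intTranslates _ hx₀J)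
  refine ⟨y, hx₀J, hfy, hyK, ?_, ?_⟩ <;> rw [hρ]
  · exact (G.tendsto_translationNumber _).congr fun n => by rw [hforward]
  · exact G.tendsto_translationNumber_of_pow_apply_eq fun n => by rw [CircleDeg1Lift.coe_pow, hGy]
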